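/- arXiv:1309.1028 — 9 statements merged into one kernel-verified Lean document; each statement's English description precedes it below -/
import Mathlib

section
/- Let n be a positive integer, let h, g : ℝ → ℝ be smooth with g nowhere zero, let θ : ℝ → ℝ be smooth and nowhere zero, and let ε₀, ε₁, ε₂ ∈ ℝ with ε₁ ≠ 0. Define T(t) = ε₁ ∫₀ᵗ θ(s)^(−n) ds + ε₂, g̃ and h̃ (as functions of t̃ along the curve t̃ = T(t)) by g̃(T(t)) = ε₁² θ(t)ⁿ g(t) and h̃(T(t)) = (θ(t)ⁿ/ε₁)(h(t) − θ′(t)/θ(t)). Suppose u : ℝ × ℝ → ℝ is C³ and satisfies u_t + uⁿ u_x + h(t) u + g(t) u_{xxx} = 0 everywhere, and suppose ũ is a C³ function satisfying ũ(T(t), ε₁ x + ε₀) = θ(t) u(t,x) for all (t,x). Then at every point (t̃, x̃) = (T(t), ε₁ x + ε₀), ũ satisfies ũ_{t̃} + ũⁿ ũ_{x̃} + h̃(t̃) ũ + g̃(t̃) ũ_{x̃x̃x̃} = 0. -/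
/-- Partial derivative in `t` of `u = u(t,x)`. -/
noncomputable def pt (u : ℝ → ℝ → ℝ) (t x : ℝ) : ℝ := deriv (fun s => u s x) t
/-- Partial derivative in `x` of `u = u(t,x)`. -/
noncomputable def px (u : ℝ → ℝ → ℝ) (t x : ℝ) : ℝ := deriv (fun y => u t y) x
/-- Third partial derivative in `x` of `u = u(t,x)`. -/
noncomputable def pxxx (u : ℝ → ℝ → ℝ) (t x : ℝ) : ℝ := iteratedDeriv 3 (fun y => u t y) x

/-- If `v (ε₁ y + ε₀) = c * w y` for all `y`, with `v, w` of class `C³`, then the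
iterated derivatives up to order 3 satisfy the corresponding scaled relations. -/
lemma scaled_iteratedDeriv (v w : ℝ → ℝ) (hv : ContDiff ℝ 3 v) (hw : ContDiff ℝ 3 w)
    (c ε₀ ε₁ : ℝ) (hvw : ∀ y, v (ε₁ * y + ε₀) = c * w y) :
    ∀ k : ℕ, k ≤ 3 → ∀ y, ε₁ ^ k * iteratedDeriv k v (ε₁ * y + ε₀) = c * iteratedDeriv k w y := by
  intro k
  induction k with
  | zero => intro _ y; simpa using hvw y
  | succ k ih =>
    intro hk3 y
    have hk : (k : ℕ∞) < 3 := by exact_mod_cast Nat.lt_of_succ_le hk3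
    have ihh := ih (Nat.le_of_succ_le hk3)
    have hdv : Differentiable ℝ (iteratedDeriv k v) := hv.differentiable_iteratedDeriv k (by exact_mod_cast hk)
    have hdw : Differentiable ℝ (iteratedDeriv k w) := hw.differentiable_iteratedDeriv k (by exact_mod_cast hk)
    have haff : HasDerivAt (fun y : ℝ => ε₁ * y + ε₀) (ε₁ * 1) y :=
      ((hasDerivAt_id y).const_mul ε₁).add_const ε₀
    have H1 : HasDerivAt (fun y => ε₁ ^ k * iteratedDeriv k v (ε₁ * y + ε₀))
        (ε₁ ^ k * (deriv (iteratedDeriv k v) (ε₁ * y + ε₀) * (ε₁ * 1))) y :=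
      (((hdv (ε₁ * y + ε₀)).hasDerivAt.comp y haff)).const_mul _
    have H2 : HasDerivAt (fun y => c * iteratedDeriv k w y)
        (c * deriv (iteratedDeriv k w) y) y :=
      (hdw y).hasDerivAt.const_mul c
    have hfun : (fun y => ε₁ ^ k * iteratedDeriv k v (ε₁ * y + ε₀))
        = fun y => c * iteratedDeriv k w y := funext ihh
    rw [hfun] at H1
    have heq := H1.unique H2
    rw [iteratedDeriv_succ, iteratedDeriv_succ, pow_succ]
    linarith [heq]

/-- Theorem 1 (forward part): the equivalence transformations of the class
`u_t + uⁿ u_x + h(t) u + g(t) u_{xxx} = 0` map solutions to solutions. -/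
theorem stmt_0 (n : ℕ) (hn : 0 < n) (h g θ : ℝ → ℝ)
    (hh : ContDiff ℝ (⊤ : ℕ∞) h) (hg : ContDiff ℝ (⊤ : ℕ∞) g) (hg0 : ∀ t, g t ≠ 0)
    (hθ : ContDiff ℝ (⊤ : ℕ∞) θ) (hθ0 : ∀ t, θ t ≠ 0)
    (ε₀ ε₁ ε₂ : ℝ) (hε₁ : ε₁ ≠ 0)
    (T : ℝ → ℝ) (hT : ∀ t, T t = ε₁ * (∫ s in (0:ℝ)..t, (θ s) ^ (-(n:ℤ))) + ε₂)
    (g2 h2 : ℝ → ℝ)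
    (hg2 : ∀ t, g2 (T t) = ε₁ ^ 2 * (θ t) ^ n * g t)
    (hh2 : ∀ t, h2 (T t) = (θ t) ^ n / ε₁ * (h t - deriv θ t / θ t))
    (u : ℝ → ℝ → ℝ) (hu : ContDiff ℝ 3 fun p : ℝ × ℝ => u p.1 p.2)
    (hpde : ∀ t x, pt u t x + (u t x) ^ n * px u t x + h t * u t x + g t * pxxx u t x = 0)
    (u2 : ℝ → ℝ → ℝ) (hu2 : ContDiff ℝ 3 fun p : ℝ × ℝ => u2 p.1 p.2)
    (htrans : ∀ t x, u2 (T t) (ε₁ * x + ε₀) = θ t * u t x) :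
    ∀ t x, pt u2 (T t) (ε₁ * x + ε₀)
        + (u2 (T t) (ε₁ * x + ε₀)) ^ n * px u2 (T t) (ε₁ * x + ε₀)
        + h2 (T t) * u2 (T t) (ε₁ * x + ε₀)
        + g2 (T t) * pxxx u2 (T t) (ε₁ * x + ε₀) = 0 := by
  intro t x
  have hθn : (θ t) ^ n ≠ 0 := pow_ne_zero n (hθ0 t)
  -- x-sections are C³
  have hv : ContDiff ℝ 3 (fun y => u2 (T t) y) :=
    hu2.comp (contDiff_const.prodMk contDiff_id)
  have hw : ContDiff ℝ 3 (fun y => u t y) :=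
    hu.comp (contDiff_const.prodMk contDiff_id)
  have key := scaled_iteratedDeriv (fun y => u2 (T t) y) (fun y => u t y) hv hw
    (θ t) ε₀ ε₁ (fun y => htrans t y)
  -- spatial derivatives
  have key1 := key 1 (by norm_num) x
  have key3 := key 3 (by norm_num) x
  simp only [iteratedDeriv_one, pow_one] at key1
  have hpx : px u2 (T t) (ε₁ * x + ε₀) = θ t * px u t x / ε₁ := by
    unfold px
    field_simp
    linarith [key1]
  have hpxxx : pxxx u2 (T t) (ε₁ * x + ε₀) = θ t * pxxx u t x / ε₁ ^ 3 := by
    unfold pxxx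
    field_simp
    linarith [key3]
  -- time derivative
  have hcont : Continuous fun s => (θ s) ^ (-(n:ℤ)) := by
    have : (fun s => (θ s) ^ (-(n:ℤ))) = fun s => ((θ s) ^ n)⁻¹ := by
      funext s; rw [zpow_neg, zpow_natCast]
    rw [this]
    exact ((hθ.continuous.pow n)).inv₀ fun s => pow_ne_zero n (hθ0 s)
  have hTfun : T = fun t => ε₁ * (∫ s in (0:ℝ)..t, (θ s) ^ (-(n:ℤ))) + ε₂ := funext hT
  have hT' : HasDerivAt T (ε₁ * (θ t) ^ (-(n:ℤ))) t := by
    rw [hTfun]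
    exact (((hcont.integral_hasStrictDerivAt 0 t).hasDerivAt).const_mul ε₁).add_const ε₂
  have hdu2t : Differentiable ℝ (fun s => u2 s (ε₁ * x + ε₀)) :=
    (hu2.comp (contDiff_id.prodMk contDiff_const)).differentiable (by norm_num)
  have hdut : Differentiable ℝ (fun s => u s x) :=
    (hu.comp (contDiff_id.prodMk contDiff_const)).differentiable (by norm_num)
  have H3 : HasDerivAt (fun s => u2 (T s) (ε₁ * x + ε₀))
      (pt u2 (T t) (ε₁ * x + ε₀) * (ε₁ * (θ t) ^ (-(n:ℤ)))) t :=
    ((hdu2t (T t)).hasDerivAt.comp t hT')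
  have H4 : HasDerivAt (fun s => θ s * u s x)
      (deriv θ t * u t x + θ t * pt u t x) t :=
    ((hθ.differentiable (by simp) t).hasDerivAt).mul (hdut t).hasDerivAt
  have hfun : (fun s => u2 (T s) (ε₁ * x + ε₀)) = fun s => θ s * u s x :=
    funext fun s => htrans s x
  rw [hfun] at H3
  have hpt := H3.unique H4
  have hzpow : (θ t) ^ (-(n:ℤ)) = ((θ t) ^ n)⁻¹ := by rw [zpow_neg, zpow_natCast]
  rw [hzpow] at hpt
  have hptval : pt u2 (T t) (ε₁ * x + ε₀)
      = (deriv θ t * u t x + θ t * pt u t x) * (θ t) ^ n / ε₁ := by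
    field_simp at hpt ⊢
    linarith [hpt]
  -- assemble
  rw [hptval, hpx, hpxxx, hg2, hh2, htrans]
  have hpde' := hpde t x
  have hθt := hθ0 t
  have expand : (deriv θ t * u t x + θ t * pt u t x) * θ t ^ n / ε₁
      + (θ t * u t x) ^ n * (θ t * px u t x / ε₁)
      + θ t ^ n / ε₁ * (h t - deriv θ t / θ t) * (θ t * u t x)
      + ε₁ ^ 2 * θ t ^ n * g t * (θ t * pxxx u t x / ε₁ ^ 3)
      = θ t ^ n * θ t / ε₁
        * (pt u t x + u t x ^ n * px u t x + h t * u t x + g t * pxxx u t x) := by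
    field_simp
    ring
  rw [expand, hpde', mul_zero]
end

section
/- Let n be a positive integer, ρ ∈ ℝ, ε ≠ 0, and δ ∈ ℝ. Suppose u : (0,∞) × ℝ → ℝ is C³ and satisfies u_t + uⁿ u_x + ε t^ρ u_{xxx} = 0 for all t > 0 and x ∈ ℝ. Then the function v(t,x) = e^((ρ−2)δ) u( e^(−3nδ) t, e^(−(ρ+1)nδ) x ) also satisfies v_t + vⁿ v_x + ε t^ρ v_{xxx} = 0 for all t > 0 and x ∈ ℝ. -/
/-!
The dilation `w(t,x) = a u(bt, cx)` has `w_t = ab u_t`, `wⁿ w_x = aⁿ⁺¹c uⁿ u_x` and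
`t^ρ w_xxx = a c³ t^ρ u_xxx`, all evaluated at `(bt, cx)`. If `aⁿ c = b` and `b^(ρ+1) = c³`,
each term is `ab` times the corresponding term of the equation for `u` at `(bt, cx)`, so `w` is
again a solution. The group element `a = e^((ρ-2)δ)`, `b = e^(-3nδ)`, `c = e^(-(ρ+1)nδ)` satisfies
both relations.
-/

/-- Unlike `iteratedDeriv_comp_const_smul`, this needs no smoothness of `f`, because
`deriv_comp_mul_left` holds unconditionally. -/
theorem iteratedDeriv_comp_mul_left {𝕜 F : Type*} [NontriviallyNormedField 𝕜]
    [NormedAddCommGroup F] [NormedSpace 𝕜 F] (n : ℕ) (f : 𝕜 → F) (c : 𝕜) :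
    iteratedDeriv n (fun x => f (c * x)) = fun x => c ^ n • iteratedDeriv n f (c * x) := by
  induction n generalizing f with
  | zero => simp
  | succ n ih =>
    have hderiv : deriv (fun x => f (c * x)) = fun x => c • deriv f (c * x) :=
      funext fun x => deriv_comp_mul_left c f x
    funext x
    rw [iteratedDeriv_succ', hderiv, iteratedDeriv_fun_const_smul_field, ih, iteratedDeriv_succ',
      smul_smul, pow_succ']

def SolvesKdV (n : ℕ) (ρ ε : ℝ) (u : ℝ → ℝ → ℝ) : Prop :=
  ∀ t, 0 < t → ∀ x : ℝ, pt u t x + (u t x) ^ n * px u t x + ε * t ^ ρ * pxxx u t x = 0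

def dilate (a b c : ℝ) (u : ℝ → ℝ → ℝ) (t x : ℝ) : ℝ := a * u (b * t) (c * x)

section Dilate

variable (a b c : ℝ) (u : ℝ → ℝ → ℝ) (t x : ℝ)

theorem pt_dilate : pt (dilate a b c u) t x = a * b * pt u (b * t) (c * x) := by
  simp only [pt, dilate, deriv_const_mul_field, deriv_comp_mul_left (f := fun s => u s (c * x)),
    smul_eq_mul]
  ring

theorem px_dilate : px (dilate a b c u) t x = a * c * px u (b * t) (c * x) := by
  simp only [px, dilate, deriv_const_mul_field, deriv_comp_mul_left (f := fun y => u (b * t) y),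
    smul_eq_mul]
  ring

theorem pxxx_dilate : pxxx (dilate a b c u) t x = a * c ^ 3 * pxxx u (b * t) (c * x) := by
  simp only [pxxx, dilate, iteratedDeriv_const_mul_field,
    iteratedDeriv_comp_mul_left 3 (fun y => u (b * t) y), smul_eq_mul]
  ring

end Dilate

theorem SolvesKdV.dilate {n : ℕ} {ρ ε a b c : ℝ} {u : ℝ → ℝ → ℝ} (hu : SolvesKdV n ρ ε u)
    (hb : 0 < b) (hab : a ^ n * c = b) (hbc : b ^ (ρ + 1) = c ^ 3) :
    SolvesKdV n ρ ε (dilate a b c u) := by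
  intro t ht x
  have hpow : b * (b * t) ^ ρ = c ^ 3 * t ^ ρ := by
    rw [← hbc, Real.rpow_add_one hb.ne', Real.mul_rpow hb.le ht.le]
    ring
  rw [pt_dilate, px_dilate, pxxx_dilate, _root_.dilate]
  linear_combination a * b * hu (b * t) (mul_pos hb ht) (c * x)
    + a * u (b * t) (c * x) ^ n * px u (b * t) (c * x) * hab
    - ε * a * pxxx u (b * t) (c * x) * hpow

theorem stmt_4_general (n : ℕ) (ρ ε : ℝ) (δ : ℝ)
    (u : ℝ → ℝ → ℝ)
    (hpde : ∀ t, 0 < t → ∀ x : ℝ,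
      pt u t x + (u t x) ^ n * px u t x + ε * t ^ ρ * pxxx u t x = 0)
    (v : ℝ → ℝ → ℝ)
    (hv : ∀ t x, v t x = Real.exp ((ρ - 2) * δ)
      * u (Real.exp (-3 * (n:ℝ) * δ) * t) (Real.exp (-(ρ + 1) * (n:ℝ) * δ) * x)) :
    ∀ t, 0 < t → ∀ x : ℝ,
      pt v t x + (v t x) ^ n * px v t x + ε * t ^ ρ * pxxx v t x = 0 := by
  obtain rfl : v = dilate (Real.exp ((ρ - 2) * δ)) (Real.exp (-3 * (n:ℝ) * δ))
      (Real.exp (-(ρ + 1) * (n:ℝ) * δ)) u := funext fun t => funext (hv t)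
  refine SolvesKdV.dilate hpde (Real.exp_pos _) ?_ ?_
  · rw [← Real.exp_nat_mul, ← Real.exp_add]
    ring_nf
  · rw [← Real.exp_mul, ← Real.exp_nat_mul]
    ring_nf

/-- Case 1 of Table 1: the one-parameter scaling group generated by
`3nt∂_t + (ρ+1)n x∂_x + (ρ−2)u∂_u` maps solutions of
`u_t + uⁿ u_x + ε t^ρ u_{xxx} = 0` (for `t > 0`) to solutions. -/
theorem stmt_4 (n : ℕ) (hn : 0 < n) (ρ ε : ℝ) (hε : ε ≠ 0) (δ : ℝ)
    (u : ℝ → ℝ → ℝ)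
    (hu : ContDiffOn ℝ 3 (fun p : ℝ × ℝ => u p.1 p.2) {p : ℝ × ℝ | 0 < p.1})
    (hpde : ∀ t, 0 < t → ∀ x : ℝ,
      pt u t x + (u t x) ^ n * px u t x + ε * t ^ ρ * pxxx u t x = 0)
    (v : ℝ → ℝ → ℝ)
    (hv : ∀ t x, v t x = Real.exp ((ρ - 2) * δ)
      * u (Real.exp (-3 * (n:ℝ) * δ) * t) (Real.exp (-(ρ + 1) * (n:ℝ) * δ) * x)) :
    ∀ t, 0 < t → ∀ x : ℝ,
      pt v t x + (v t x) ^ n * px v t x + ε * t ^ ρ * pxxx v t x = 0 :=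
  stmt_4_general n ρ ε δ u hpde v hv
end

section
/- Let n be a positive integer, ε ≠ 0, and δ ∈ ℝ. Suppose u : ℝ × ℝ → ℝ is C³ and satisfies u_t + uⁿ u_x + ε e^t u_{xxx} = 0 everywhere. Then the function v(t,x) = e^δ u( t − 3nδ, e^(−nδ) x ) also satisfies v_t + vⁿ v_x + ε e^t v_{xxx} = 0 everywhere. -/
/-!
Write `v(t,x) = A u(t - τ, c x)` with `A = e^δ`, `τ = 3nδ`, `c = e^{-nδ}`. Then `v_t = A u_t`,
`v_x = A c u_x` and `v_xxx = A c³ u_xxx`, all evaluated at `(t - τ, c x)`. Since `Aⁿ c = 1` and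
`e^t c³ = e^{t - τ}`, each of the three terms of the equation for `v` is `A` times the
corresponding term of the equation for `u` at the transformed point.
-/

section Rescale

variable (u : ℝ → ℝ → ℝ) (A τ c t x : ℝ)

lemma pt_rescale :
    pt (fun t x => A * u (t - τ) (c * x)) t x = A * pt u (t - τ) (c * x) := by
  simp only [pt, deriv_const_mul_field', deriv_comp_sub_const (f := fun s => u s (c * x))]

lemma px_rescale :
    px (fun t x => A * u (t - τ) (c * x)) t x = A * c * px u (t - τ) (c * x) := by
  simp only [px, deriv_const_mul_field', deriv_comp_mul_left (f := fun y => u (t - τ) y),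
    smul_eq_mul, mul_assoc]

lemma pxxx_rescale (hu : ContDiff ℝ 3 fun y => u (t - τ) y) :
    pxxx (fun t x => A * u (t - τ) (c * x)) t x = A * c ^ 3 * pxxx u (t - τ) (c * x) := by
  simp only [pxxx, iteratedDeriv_const_mul_field, iteratedDeriv_comp_const_mul hu, mul_assoc]

end Rescale

theorem stmt_5_general (n : ℕ) (ε : ℝ) (δ : ℝ)
    (u : ℝ → ℝ → ℝ) (hu : ContDiff ℝ 3 fun p : ℝ × ℝ => u p.1 p.2)
    (hpde : ∀ t x : ℝ,
      pt u t x + (u t x) ^ n * px u t x + ε * Real.exp t * pxxx u t x = 0)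
    (v : ℝ → ℝ → ℝ)
    (hv : ∀ t x, v t x = Real.exp δ * u (t - 3 * (n:ℝ) * δ) (Real.exp (-(n:ℝ) * δ) * x)) :
    ∀ t x : ℝ,
      pt v t x + (v t x) ^ n * px v t x + ε * Real.exp t * pxxx v t x = 0 := by
  obtain rfl : v = fun t x => Real.exp δ * u (t - 3 * n * δ) (Real.exp (-n * δ) * x) :=
    funext₂ hv
  intro t x
  have hslice : ContDiff ℝ 3 fun y => u (t - 3 * n * δ) y :=
    hu.comp (contDiff_const.prodMk contDiff_id)
  have hpow : Real.exp δ ^ n * Real.exp (-n * δ) = 1 := by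
    rw [← Real.exp_nat_mul, ← Real.exp_add]
    simp
  have hcube : Real.exp t * Real.exp (-n * δ) ^ 3 = Real.exp (t - 3 * n * δ) := by
    rw [← Real.exp_nat_mul, ← Real.exp_add]
    ring_nf
  rw [pt_rescale, px_rescale, pxxx_rescale (hu := hslice)]
  beta_reduce
  set y := Real.exp (-n * δ) * x
  set s := t - 3 * n * δ
  linear_combination Real.exp δ * hpde s y + Real.exp δ * u s y ^ n * px u s y * hpow +
    ε * Real.exp δ * pxxx u s y * hcube

/-- Case 2 of Table 1: the one-parameter group generated by `3n∂_t + nx∂_x + u∂_u`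
maps solutions of `u_t + uⁿ u_x + ε e^t u_{xxx} = 0` to solutions. -/
theorem stmt_5 (n : ℕ) (hn : 0 < n) (ε : ℝ) (hε : ε ≠ 0) (δ : ℝ)
    (u : ℝ → ℝ → ℝ) (hu : ContDiff ℝ 3 fun p : ℝ × ℝ => u p.1 p.2)
    (hpde : ∀ t x : ℝ,
      pt u t x + (u t x) ^ n * px u t x + ε * Real.exp t * pxxx u t x = 0)
    (v : ℝ → ℝ → ℝ)
    (hv : ∀ t x, v t x = Real.exp δ * u (t - 3 * (n:ℝ) * δ) (Real.exp (-(n:ℝ) * δ) * x)) :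
    ∀ t x : ℝ,
      pt v t x + (v t x) ^ n * px v t x + ε * Real.exp t * pxxx v t x = 0 :=
  stmt_5_general n ε δ u hu hpde v hv
end

section
/- Let n be a positive integer, ρ ∈ ℝ with ρ ≠ −1, and ε ≠ 0. Suppose φ : ℝ → ℝ is three times differentiable and satisfies the ODE ε φ'''(ω) + (φ(ω)ⁿ − ((ρ+1)/3) ω) φ'(ω) + ((ρ−2)/(3n)) φ(ω) = 0 for all ω ∈ ℝ. Then u(t,x) = t^((ρ−2)/(3n)) φ( x t^(−(ρ+1)/3) ) satisfies u_t + uⁿ u_x + ε t^ρ u_{xxx} = 0 for all t > 0 and x ∈ ℝ. -/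
/-- Case 1 of Table 4: a solution of the reduced ODE
`ε φ''' + (φⁿ − ((ρ+1)/3)ω) φ' + ((ρ−2)/(3n)) φ = 0` gives, via the ansatz
`u = t^{(ρ−2)/(3n)} φ(x t^{−(ρ+1)/3})`, a solution of `u_t + uⁿ u_x + ε t^ρ u_{xxx} = 0`. -/
theorem stmt_7 (n : ℕ) (hn : 0 < n) (ρ : ℝ) (hρ : ρ ≠ -1) (ε : ℝ) (hε : ε ≠ 0)
    (φ : ℝ → ℝ) (hφ1 : Differentiable ℝ φ) (hφ2 : Differentiable ℝ (deriv φ))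
    (hφ3 : Differentiable ℝ (deriv (deriv φ)))
    (hode : ∀ ω : ℝ, ε * deriv (deriv (deriv φ)) ω
      + (φ ω ^ n - (ρ + 1) / 3 * ω) * deriv φ ω + (ρ - 2) / (3 * (n:ℝ)) * φ ω = 0)
    (u : ℝ → ℝ → ℝ)
    (hu : ∀ t x, u t x = t ^ ((ρ - 2) / (3 * (n:ℝ))) * φ (x * t ^ (-(ρ + 1) / 3))) :
    ∀ t, 0 < t → ∀ x : ℝ,
      pt u t x + (u t x) ^ n * px u t x + ε * t ^ ρ * pxxx u t x = 0 := by
  intro t ht x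
  have ht' : t ≠ 0 := ne_of_gt ht
  set a : ℝ := (ρ - 2) / (3 * (n:ℝ)) with ha
  set b : ℝ := -(ρ + 1) / 3 with hb
  set ω : ℝ := x * t ^ b with hω
  -- derivative in x at an arbitrary point, for each of φ, φ', φ''
  have key : ∀ (c : ℝ) (ψ : ℝ → ℝ), Differentiable ℝ ψ →
      deriv (fun y : ℝ => c * ψ (y * t ^ b))
        = fun y : ℝ => c * (deriv ψ (y * t ^ b) * t ^ b) := by
    intro c ψ hψ
    funext y
    have h1 : HasDerivAt (fun y : ℝ => y * t ^ b) (t ^ b) y := by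
      simpa using (hasDerivAt_id y).mul_const (t ^ b)
    have h2 : HasDerivAt (fun y : ℝ => ψ (y * t ^ b)) (deriv ψ (y * t ^ b) * t ^ b) y :=
      (hψ (y * t ^ b)).hasDerivAt.comp y h1
    exact (h2.const_mul c).deriv
  have hux : (fun y => u t y) = fun y : ℝ => t ^ a * φ (y * t ^ b) := by
    funext y; rw [hu]
  -- px
  have hpx : px u t x = t ^ a * (deriv φ ω * t ^ b) := by
    rw [px, hux, key (t ^ a) φ hφ1]
  -- pxxx
  have hpxxx : pxxx u t x = t ^ a * (deriv (deriv (deriv φ)) ω * t ^ b * t ^ b * t ^ b) := by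
    rw [pxxx, hux]
    rw [show (3:ℕ) = 2 + 1 from rfl, iteratedDeriv_succ,
      show (2:ℕ) = 1 + 1 from rfl, iteratedDeriv_succ, iteratedDeriv_one]
    rw [key (t ^ a) φ hφ1]
    have e1 : (fun y : ℝ => t ^ a * (deriv φ (y * t ^ b) * t ^ b))
        = fun y : ℝ => t ^ a * t ^ b * deriv φ (y * t ^ b) := by
      funext y; ring
    rw [e1, key (t ^ a * t ^ b) (deriv φ) hφ2]
    have e2 : (fun y : ℝ => t ^ a * t ^ b * (deriv (deriv φ) (y * t ^ b) * t ^ b))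
        = fun y : ℝ => t ^ a * t ^ b * t ^ b * deriv (deriv φ) (y * t ^ b) := by
      funext y; ring
    rw [e2, key (t ^ a * t ^ b * t ^ b) (deriv (deriv φ)) hφ3]
    ring
  -- pt
  have hpt : pt u t x
      = a * t ^ (a - 1) * φ ω + t ^ a * (deriv φ ω * (x * (b * t ^ (b - 1)))) := by
    rw [pt]
    have hut : (fun s => u s x) = fun s : ℝ => s ^ a * φ (x * s ^ b) := by
      funext s; rw [hu]
    rw [hut]
    have h1 : HasDerivAt (fun s : ℝ => s ^ a) (a * t ^ (a - 1)) t :=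
      Real.hasDerivAt_rpow_const (Or.inl ht')
    have h2 : HasDerivAt (fun s : ℝ => x * s ^ b) (x * (b * t ^ (b - 1))) t :=
      (Real.hasDerivAt_rpow_const (Or.inl ht')).const_mul x
    have h3 : HasDerivAt (fun s : ℝ => φ (x * s ^ b))
        (deriv φ ω * (x * (b * t ^ (b - 1)))) t :=
      (hφ1 ω).hasDerivAt.comp t h2
    exact (h1.mul h3).deriv
  rw [hpt, hpx, hpxxx, hu]
  -- helper rpow identities
  have hb3 : ρ + 3 * b = -1 := by rw [hb]; ring
  have han : a * n + b = -1 := by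
    rw [ha, hb]; field_simp; ring
  have e1 : t ^ a * t ^ (b - 1) = t ^ (a - 1) * t ^ b := by
    rw [← Real.rpow_add ht, ← Real.rpow_add ht]; ring_nf
  have e2 : t ^ (a * n) * (t ^ a * t ^ b) = t ^ (a - 1) := by
    rw [← Real.rpow_add ht, ← Real.rpow_add ht]
    congr 1; linarith [han]
  have e3 : t ^ ρ * (t ^ a * (t ^ b * t ^ b * t ^ b)) = t ^ (a - 1) := by
    rw [← Real.rpow_add ht, ← Real.rpow_add ht, ← Real.rpow_add ht, ← Real.rpow_add ht]
    congr 1; linarith [hb3]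
  have epow : (t ^ a * φ ω) ^ n = t ^ (a * n) * φ ω ^ n := by
    rw [mul_pow, ← Real.rpow_natCast (t ^ a) n, ← Real.rpow_mul ht.le]
  have hO := hode ω
  rw [epow]
  have hbω : (ρ + 1) / 3 = -b := by rw [hb]; ring
  -- now a purely algebraic identity using e1, e2, e3 and the ODE
  linear_combination t ^ (a - 1) * hO
    + (deriv φ ω * x * b) * e1
    + (φ ω ^ n * deriv φ ω) * e2
    + (ε * deriv (deriv (deriv φ)) ω) * e3
    + (t ^ (a - 1) * ω * deriv φ ω) * hbω
end

section
/- Let n be a positive integer, a ∈ ℝ, and ε ≠ 0. Suppose φ : ℝ → ℝ is three times differentiable and satisfies the ODE ε φ'''(ω) + (φ(ω)ⁿ − a/n) φ'(ω) − (1/n) φ(ω) = 0 for all ω ∈ ℝ. Then u(t,x) = t^(−1/n) φ( x − (a/n) ln t ) satisfies u_t + uⁿ u_x + ε t^(−1) u_{xxx} = 0 for all t > 0 and x ∈ ℝ. -/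
/-!
On each time slice the ansatz is a constant multiple of a translate of `φ`, so its `x`-derivatives
are `t^(-1/n) φ^(k)(ω)`, while the chain rule gives `u_t = t^(-1/n - 1) (-(1/n) φ(ω) - (a/n) φ'(ω))`.
Since `(t^(-1/n))ⁿ = t⁻¹`, every term of the PDE carries the common factor `t^(-1/n - 1)`, and
what is left is exactly the left-hand side of the reduced ODE at `ω`.
-/

open Real

theorem iteratedDeriv_const_mul_comp_sub_const {𝕜 : Type*} [NontriviallyNormedField 𝕜]
    (k : ℕ) (C d : 𝕜) (g : 𝕜 → 𝕜) (x : 𝕜) :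
    iteratedDeriv k (fun y => C * g (y - d)) x = C * iteratedDeriv k g (x - d) := by
  rw [iteratedDeriv_const_mul_field, iteratedDeriv_comp_sub_const]

theorem hasDerivAt_rpow_mul_comp_sub_mul_log {φ : ℝ → ℝ} {p b x t : ℝ} (ht : t ≠ 0)
    (hφ : DifferentiableAt ℝ φ (x - b * log t)) :
    HasDerivAt (fun s => s ^ p * φ (x - b * log s))
      (t ^ (p - 1) * (p * φ (x - b * log t) - b * deriv φ (x - b * log t))) t := by
  have hpow : HasDerivAt (fun s => s ^ p) (p * t ^ (p - 1)) t :=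
    hasDerivAt_rpow_const (Or.inl ht)
  have harg : HasDerivAt (fun s => x - b * log s) (-(b * t⁻¹)) t := by
    simpa using ((hasDerivAt_log ht).const_mul b).const_sub x
  refine (hpow.mul (hφ.hasDerivAt.comp t harg)).congr_deriv ?_
  rw [rpow_sub_one ht, Function.comp_apply]
  field_simp
  ring

theorem rpow_neg_one_div_natCast_pow {t : ℝ} (ht : 0 ≤ t) {n : ℕ} (hn : n ≠ 0) :
    (t ^ (-(1 : ℝ) / n)) ^ n = t ^ (-1 : ℝ) := by
  rw [← rpow_natCast, ← rpow_mul ht]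
  congr 1
  field_simp

theorem stmt_8_general (n : ℕ) (hn : 0 < n) (a : ℝ) (ε : ℝ)
    (φ : ℝ → ℝ) (hφ1 : Differentiable ℝ φ)
    (hode : ∀ ω : ℝ, ε * deriv (deriv (deriv φ)) ω
      + (φ ω ^ n - a / (n:ℝ)) * deriv φ ω - 1 / (n:ℝ) * φ ω = 0)
    (u : ℝ → ℝ → ℝ)
    (hu : ∀ t x, u t x = t ^ (-(1:ℝ) / (n:ℝ)) * φ (x - a / (n:ℝ) * Real.log t)) :
    ∀ t, 0 < t → ∀ x : ℝ,
      pt u t x + (u t x) ^ n * px u t x + ε * t ^ (-1 : ℝ) * pxxx u t x = 0 := by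
  intro t ht x
  set ω := x - a / n * log t
  set P := t ^ (-(1:ℝ) / n)
  have hslice : (fun y => u t y) = fun y => P * φ (y - a / n * log t) := funext (hu t)
  have hpt : pt u t x = t ^ (-(1:ℝ) / n - 1) * (-(1:ℝ) / n * φ ω - a / n * deriv φ ω) := by
    rw [pt, show (fun s => u s x) = _ from funext fun s => hu s x]
    exact (hasDerivAt_rpow_mul_comp_sub_mul_log ht.ne' (hφ1 _)).deriv
  have hpx : px u t x = P * deriv φ ω := by
    simpa [px, hslice] using iteratedDeriv_const_mul_comp_sub_const 1 P (a / n * log t) φ x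
  have hpxxx : pxxx u t x = P * deriv (deriv (deriv φ)) ω := by
    simpa [pxxx, hslice, iteratedDeriv_succ] using
      iteratedDeriv_const_mul_comp_sub_const 3 P (a / n * log t) φ x
  have hPn : P ^ n = t ^ (-1 : ℝ) := rpow_neg_one_div_natCast_pow ht.le hn.ne'
  have hTP : t ^ (-1 : ℝ) * P = t ^ (-(1:ℝ) / n - 1) := by
    rw [← rpow_add ht]; ring_nf
  rw [hpt, hpx, hpxxx, hu, mul_pow]
  linear_combination t ^ (-(1:ℝ) / n - 1) * hode ω + P * φ ω ^ n * deriv φ ω * hPn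
    + (φ ω ^ n * deriv φ ω + ε * deriv (deriv (deriv φ)) ω) * hTP

/-- Case 2 of Table 4: a solution of the reduced ODE
`ε φ''' + (φⁿ − a/n) φ' − (1/n) φ = 0` gives, via the ansatz
`u = t^{−1/n} φ(x − (a/n) ln t)`, a solution of `u_t + uⁿ u_x + ε t^{−1} u_{xxx} = 0`. -/
theorem stmt_8 (n : ℕ) (hn : 0 < n) (a : ℝ) (ε : ℝ) (hε : ε ≠ 0)
    (φ : ℝ → ℝ) (hφ1 : Differentiable ℝ φ) (hφ2 : Differentiable ℝ (deriv φ))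
    (hφ3 : Differentiable ℝ (deriv (deriv φ)))
    (hode : ∀ ω : ℝ, ε * deriv (deriv (deriv φ)) ω
      + (φ ω ^ n - a / (n:ℝ)) * deriv φ ω - 1 / (n:ℝ) * φ ω = 0)
    (u : ℝ → ℝ → ℝ)
    (hu : ∀ t x, u t x = t ^ (-(1:ℝ) / (n:ℝ)) * φ (x - a / (n:ℝ) * Real.log t)) :
    ∀ t, 0 < t → ∀ x : ℝ,
      pt u t x + (u t x) ^ n * px u t x + ε * t ^ (-1 : ℝ) * pxxx u t x = 0 :=
  stmt_8_general n hn a ε φ hφ1 hode u hu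
end

section
/- Let n, ε, σ, C be real constants with n ≠ 0, σ/ε > 0, and −σ(n+1)(n+2) > 0. Define φ by φ(ω) = ( −σ(n+1)(n+2) / ( 2 sinh²( (n/2) √(σ/ε) ω + C ) ) )^(1/n), where the outer exponent 1/n is a real power of a positive number. Then on the open set of ω ∈ ℝ where (n/2) √(σ/ε) ω + C ≠ 0, φ is positive, smooth, and satisfies ε φ'''(ω) + (φ(ω)ⁿ − σ) φ'(ω) = 0, where φⁿ denotes the real power φ^n. -/
set_option maxHeartbeats 1000000 in
/-- The explicit singular solution of the traveling-wave reduced ODE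
`ε φ''' + (φⁿ − σ) φ' = 0`, given in terms of the hyperbolic sine, valid on the open
set where the argument of `sinh` is nonzero. -/
theorem stmt_13 (n ε σ C : ℝ) (hn : n ≠ 0) (hσε : 0 < σ / ε)
    (hpos : 0 < -(σ * (n + 1) * (n + 2))) (φ : ℝ → ℝ)
    (hφ : ∀ ω : ℝ, φ ω = (-(σ * (n + 1) * (n + 2))
      / (2 * Real.sinh (n / 2 * Real.sqrt (σ / ε) * ω + C) ^ 2)) ^ (1 / n)) :
    (∀ ω : ℝ, n / 2 * Real.sqrt (σ / ε) * ω + C ≠ 0 → 0 < φ ω) ∧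
    ContDiffOn ℝ (⊤ : ℕ∞) φ {ω : ℝ | n / 2 * Real.sqrt (σ / ε) * ω + C ≠ 0} ∧
      ∀ ω : ℝ, n / 2 * Real.sqrt (σ / ε) * ω + C ≠ 0 →
        ε * deriv (deriv (deriv φ)) ω + (φ ω ^ n - σ) * deriv φ ω = 0 := by
  have hε : ε ≠ 0 := by
    rintro rfl; simp at hσε
  set k : ℝ := n / 2 * Real.sqrt (σ / ε) with hkdef
  set A : ℝ := -(σ * (n + 1) * (n + 2)) with hAdef
  have hA0 : 0 < A := hpos
  have hA2 : 0 < A / 2 := by linarith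
  have hk2 : ε * k ^ 2 = σ * n ^ 2 / 4 := by
    have hsq : Real.sqrt (σ / ε) ^ 2 = σ / ε := Real.sq_sqrt hσε.le
    rw [hkdef, mul_pow, hsq]; field_simp; ring
  set p : ℝ := -(1 / n) with hpdef
  have hp0 : p ≠ 0 := by simp [hpdef, hn]
  set c0 : ℝ := (A / 2) ^ (1 / n) with hc0def
  have hc00 : 0 < c0 := Real.rpow_pos_of_pos hA2 _
  -- rewrite φ in product form
  have hφ' : ∀ ω : ℝ, φ ω = c0 * (Real.sinh (k * ω + C) ^ 2) ^ p := by
    intro ω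
    rw [hφ ω]
    rcases eq_or_ne (Real.sinh (k * ω + C)) 0 with hs | hs
    · rw [hs]
      have h2 : (2:ℝ) * (0:ℝ) ^ 2 = 0 := by norm_num
      rw [h2, div_zero, Real.zero_rpow (one_div_ne_zero hn)]
      have h3 : ((0:ℝ) ^ 2 : ℝ) = 0 := by norm_num
      rw [h3, Real.zero_rpow hp0, mul_zero]
    · have hs2 : (0:ℝ) < Real.sinh (k * ω + C) ^ 2 := by positivity
      rw [show A / (2 * Real.sinh (k * ω + C) ^ 2)
            = (A / 2) * (Real.sinh (k * ω + C) ^ 2)⁻¹ by field_simp,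
        Real.mul_rpow hA2.le (by positivity),
        Real.inv_rpow (sq_nonneg _), ← Real.rpow_neg (sq_nonneg _)]
  set S : Set ℝ := {ω : ℝ | k * ω + C ≠ 0} with hSdef
  have hSopen : IsOpen S := by
    have : Continuous fun ω : ℝ => k * ω + C := by continuity
    exact isOpen_compl_singleton.preimage this
  -- abbreviations
  set s : ℝ → ℝ := fun ω => Real.sinh (k * ω + C) with hsdef
  set c : ℝ → ℝ := fun ω => Real.cosh (k * ω + C) with hcdef
  set Q : ℝ → ℝ := fun ω => (s ω ^ 2) ^ p with hQdef
  set H : ℝ → ℝ := fun ω => c ω / s ω with hHdef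
  have hsne : ∀ x ∈ S, s x ≠ 0 := by
    intro x hx
    simpa [hsdef, Real.sinh_eq_zero] using (show k * x + C ≠ 0 from hx)
  have hsd : ∀ x : ℝ, HasDerivAt s (k * c x) x := by
    intro x
    have h1 : HasDerivAt (fun ω : ℝ => k * ω + C) k x := by
      simpa using ((hasDerivAt_id x).const_mul k).add_const C
    have h2 := (Real.hasDerivAt_sinh (k * x + C)).comp x h1
    show HasDerivAt (fun ω => Real.sinh (k * ω + C)) (k * Real.cosh (k * x + C)) x
    simpa [Function.comp_def, mul_comm] using h2
  have hcd : ∀ x : ℝ, HasDerivAt c (k * s x) x := by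
    intro x
    have h1 : HasDerivAt (fun ω : ℝ => k * ω + C) k x := by
      simpa using ((hasDerivAt_id x).const_mul k).add_const C
    have h2 := (Real.hasDerivAt_cosh (k * x + C)).comp x h1
    show HasDerivAt (fun ω => Real.cosh (k * ω + C)) (k * Real.sinh (k * x + C)) x
    simpa [Function.comp_def, mul_comm] using h2
  have hcsq : ∀ x : ℝ, c x ^ 2 = s x ^ 2 + 1 := fun x => Real.cosh_sq _
  have hQd : ∀ x ∈ S, HasDerivAt Q (2 * p * k * Q x * H x) x := by
    intro x hx
    have hs0 := hsne x hx
    have hs2 : s x ^ 2 ≠ 0 := pow_ne_zero _ hs0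
    have hinner : HasDerivAt (fun ω => s ω ^ 2) (2 * s x * (k * c x)) x := by
      simpa [mul_comm, mul_assoc] using (hsd x).fun_pow 2
    have houter := Real.hasDerivAt_rpow_const (x := s x ^ 2) (p := p) (Or.inl hs2)
    have hcomp := houter.comp x hinner
    refine hcomp.congr_deriv ?_
    have hsub : (s x ^ 2 : ℝ) ^ (p - 1) = (s x ^ 2) ^ p / s x ^ 2 := by
      rw [Real.rpow_sub (lt_of_le_of_ne (sq_nonneg _) (Ne.symm (pow_ne_zero 2 hs0))),
        Real.rpow_one]
    rw [hsub]
    simp only [hQdef, hHdef]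
    field_simp [hHdef, hQdef]
  have hHd : ∀ x ∈ S, HasDerivAt H (k * (1 - H x ^ 2)) x := by
    intro x hx
    have hs0 := hsne x hx
    have := (hcd x).div (hsd x) hs0
    refine this.congr_deriv ?_
    simp only [hHdef]
    field_simp [hHdef]
  -- derivative functions
  set φ1 : ℝ → ℝ := fun ω => c0 * (2 * p * k) * Q ω * H ω with hφ1def
  set φ2 : ℝ → ℝ := fun ω => c0 * (2 * p * k ^ 2) * Q ω * ((2 * p - 1) * H ω ^ 2 + 1)
    with hφ2def
  set φ3 : ℝ → ℝ := fun ω =>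
    c0 * (2 * p * k ^ 3) * Q ω * H ω * ((2 * p - 1) * (2 * p - 2) * H ω ^ 2 + (6 * p - 2))
    with hφ3def
  have hφeq : φ = fun ω => c0 * Q ω := funext hφ'
  have hφd : ∀ x ∈ S, HasDerivAt φ (φ1 x) x := by
    intro x hx
    rw [hφeq]
    have := (hQd x hx).const_mul c0
    refine this.congr_deriv ?_
    simp only [hφ1def]; ring
  have hφ1d : ∀ x ∈ S, HasDerivAt φ1 (φ2 x) x := by
    intro x hx
    have h := (((hQd x hx).mul (hHd x hx)).const_mul (c0 * (2 * p * k)))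
    have heq : φ1 = fun ω => c0 * (2 * p * k) * (Q ω * H ω) := by
      funext ω; rw [hφ1def]; ring
    rw [heq]
    refine h.congr_deriv ?_
    simp only [hφ2def]; ring
  have hφ2d : ∀ x ∈ S, HasDerivAt φ2 (φ3 x) x := by
    intro x hx
    have hH2 : HasDerivAt (fun ω => (2 * p - 1) * H ω ^ 2 + 1)
        ((2 * p - 1) * (2 * H x * (k * (1 - H x ^ 2)))) x := by
      have := (((hHd x hx).pow 2).const_mul (2 * p - 1)).add_const 1
      refine this.congr_deriv ?_
      ring
    have h := (((hQd x hx).mul hH2).const_mul (c0 * (2 * p * k ^ 2)))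
    have heq : φ2 = fun ω => c0 * (2 * p * k ^ 2) * (Q ω * ((2 * p - 1) * H ω ^ 2 + 1)) := by
      funext ω; rw [hφ2def]; ring
    rw [heq]
    refine h.congr_deriv ?_
    simp only [hφ3def]; ring
  refine ⟨?_, ?_, ?_⟩
  · intro ω hω
    have hs0 : Real.sinh (k * ω + C) ≠ 0 := by
      simpa [Real.sinh_eq_zero] using hω
    rw [hφ ω]
    have : (0:ℝ) < A / (2 * Real.sinh (k * ω + C) ^ 2) := by positivity
    exact Real.rpow_pos_of_pos this _
  · rw [hφeq]
    intro x hx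
    have hs0 := hsne x hx
    have hs2 : s x ^ 2 ≠ 0 := pow_ne_zero _ hs0
    apply ContDiffAt.contDiffWithinAt
    have hinner : ContDiffAt ℝ (⊤ : ℕ∞) (fun ω => s ω ^ 2) x := by
      have : ContDiff ℝ (⊤ : ℕ∞) (fun ω : ℝ => Real.sinh (k * ω + C)) :=
        Real.contDiff_sinh.comp ((contDiff_const.mul contDiff_id).add contDiff_const)
      exact (this.pow 2).contDiffAt
    have houter : ContDiffAt ℝ (⊤ : ℕ∞) (fun y : ℝ => y ^ p) (s x ^ 2) :=
      Real.contDiffAt_rpow_const_of_ne hs2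
    have hQc := houter.comp x hinner
    exact contDiffAt_const.mul hQc
  · intro ω hω
    have hωS : ω ∈ S := hω
    have hs0 := hsne ω hωS
    -- identify the iterated derivatives on S
    have hd1 : ∀ x ∈ S, deriv φ x = φ1 x := fun x hx => (hφd x hx).deriv
    have hd2 : ∀ x ∈ S, deriv (deriv φ) x = φ2 x := by
      intro x hx
      have hev : deriv φ =ᶠ[nhds x] φ1 :=
        Filter.eventuallyEq_of_mem (hSopen.mem_nhds hx) hd1
      rw [hev.deriv_eq]
      exact (hφ1d x hx).deriv
    have hd3 : deriv (deriv (deriv φ)) ω = φ3 ω := by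
      have hev : deriv (deriv φ) =ᶠ[nhds ω] φ2 :=
        Filter.eventuallyEq_of_mem (hSopen.mem_nhds hωS) hd2
      rw [hev.deriv_eq]
      exact (hφ2d ω hωS).deriv
    rw [hd3, hd1 ω hωS]
    have hs2pos : (0:ℝ) < s ω ^ 2 :=
      lt_of_le_of_ne (sq_nonneg _) (Ne.symm (pow_ne_zero 2 hs0))
    have hQpos : (0:ℝ) < Q ω := Real.rpow_pos_of_pos hs2pos _
    have hφn : φ ω ^ n = A / 2 / s ω ^ 2 := by
      rw [hφ' ω, Real.mul_rpow hc00.le hQpos.le]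
      have h1 : c0 ^ n = A / 2 := by
        rw [hc0def, ← Real.rpow_mul hA2.le, one_div, inv_mul_cancel₀ hn, Real.rpow_one]
      have h2 : Q ω ^ n = (s ω ^ 2)⁻¹ := by
        rw [hQdef, ← Real.rpow_mul (sq_nonneg _)]
        have hpn : p * n = -1 := by rw [hpdef]; field_simp
        rw [hpn, Real.rpow_neg_one]
      rw [h1, h2]; ring
    rw [hφn]
    have hH2 : H ω ^ 2 = (s ω ^ 2 + 1) / s ω ^ 2 := by
      rw [hHdef]
      show (c ω / s ω) ^ 2 = _
      rw [div_pow, hcsq ω]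
    have key : ε * k ^ 2 * ((2 * p - 1) * (2 * p - 2) * H ω ^ 2 + (6 * p - 2))
        + (A / 2 / s ω ^ 2 - σ) = 0 := by
      rw [hH2, hk2, hpdef, hAdef]
      field_simp
      ring
    simp only [hφ1def, hφ3def]
    linear_combination (c0 * (2 * p * k) * Q ω * H ω) * key
end

section
/- Let n, ε, σ, C be real constants with n ≠ 0, σ/ε > 0, and −σ(n+1)(n+2) > 0. Define u(t,x) = ( −σ(n+1)(n+2) / ( 2 sinh²( (n/2) √(σ/ε) (x − σt) + C ) ) )^(1/n), where the outer exponent 1/n is a real power of a positive number. Then on the open set of (t,x) where (n/2) √(σ/ε) (x − σt) + C ≠ 0, u is positive, smooth, and satisfies the generalized KdV equation u_t + uⁿ u_x + ε u_{xxx} = 0, where uⁿ denotes the real power u^n. -/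
open Real

noncomputable def gkdvG (A n : ℝ) (z : ℝ) : ℝ := (A / (2 * Real.sinh z ^ 2)) ^ (1 / n)
noncomputable def gkdvG1 (A n : ℝ) (z : ℝ) : ℝ :=
  -(2 / n) * gkdvG A n z * (Real.cosh z / Real.sinh z)
noncomputable def gkdvG2 (A n : ℝ) (z : ℝ) : ℝ :=
  gkdvG A n z * (-(2 / n) + ((2 / n) ^ 2 + 2 / n) * (Real.cosh z / Real.sinh z) ^ 2)
noncomputable def gkdvG3 (A n : ℝ) (z : ℝ) : ℝ :=
  gkdvG A n z * (Real.cosh z / Real.sinh z) *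
    ((12 / n ^ 2 + 4 / n) + (-(8 / n ^ 3) - 12 / n ^ 2 - 4 / n) * (Real.cosh z / Real.sinh z) ^ 2)

lemma gkdv_base_pos {A : ℝ} (hA : 0 < A) {z : ℝ} (hs : Real.sinh z ≠ 0) :
    0 < A / (2 * Real.sinh z ^ 2) :=
  div_pos hA (by have := pow_two_pos_of_ne_zero hs; linarith)

lemma gkdv_pos {A n : ℝ} (hA : 0 < A) {z : ℝ} (hs : Real.sinh z ≠ 0) :
    0 < gkdvG A n z :=
  Real.rpow_pos_of_pos (gkdv_base_pos hA hs) _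

lemma gkdv_rpow_n {A n : ℝ} (hA : 0 < A) (hn : n ≠ 0) {z : ℝ} (hs : Real.sinh z ≠ 0) :
    gkdvG A n z ^ n = A / (2 * Real.sinh z ^ 2) := by
  rw [gkdvG, ← Real.rpow_mul (gkdv_base_pos hA hs).le, one_div, inv_mul_cancel₀ hn,
    Real.rpow_one]

lemma gkdv_hasDerivAt_q {z : ℝ} (hs : Real.sinh z ≠ 0) :
    HasDerivAt (fun z => Real.cosh z / Real.sinh z)
      (1 - (Real.cosh z / Real.sinh z) ^ 2) z := by
  have h := (Real.hasDerivAt_cosh z).div (Real.hasDerivAt_sinh z) hs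
  refine h.congr_deriv ?_
  have hc := Real.cosh_sq z
  field_simp

lemma gkdv_d1 {A n : ℝ} (hA : 0 < A) (hn : n ≠ 0) {z : ℝ} (hs : Real.sinh z ≠ 0) :
    HasDerivAt (gkdvG A n) (gkdvG1 A n z) z := by
  have hb := gkdv_base_pos hA hs
  have hden : HasDerivAt (fun z => 2 * Real.sinh z ^ 2)
      (2 * ((2 : ℕ) * Real.sinh z ^ (2 - 1) * Real.cosh z)) z :=
    ((Real.hasDerivAt_sinh z).pow 2).const_mul 2
  have hbase := (hasDerivAt_const z A).div hden (by
    have := pow_two_pos_of_ne_zero hs; positivity)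
  have h := hbase.rpow_const (p := 1 / n) (Or.inl hb.ne')
  refine h.congr_deriv ?_
  rw [gkdvG1, gkdvG, Pi.div_apply, Real.rpow_sub hb, Real.rpow_one]
  have hbne : A / (2 * Real.sinh z ^ 2) ≠ 0 := hb.ne'
  field_simp
  ring

lemma gkdv_d2 {A n : ℝ} (hA : 0 < A) (hn : n ≠ 0) {z : ℝ} (hs : Real.sinh z ≠ 0) :
    HasDerivAt (gkdvG1 A n) (gkdvG2 A n z) z := by
  have h := (((gkdv_d1 hA hn hs).const_mul (-(2 / n))).mul (gkdv_hasDerivAt_q hs))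
  refine h.congr_deriv ?_
  rw [gkdvG2, gkdvG1]
  field_simp
  ring

lemma gkdv_d3 {A n : ℝ} (hA : 0 < A) (hn : n ≠ 0) {z : ℝ} (hs : Real.sinh z ≠ 0) :
    HasDerivAt (gkdvG2 A n) (gkdvG3 A n z) z := by
  have hin : HasDerivAt
      (fun z => -(2 / n) + ((2 / n) ^ 2 + 2 / n) * (Real.cosh z / Real.sinh z) ^ 2)
      (((2 : ℕ) * (Real.cosh z / Real.sinh z) ^ (2 - 1) *
        (1 - (Real.cosh z / Real.sinh z) ^ 2)) * ((2 / n) ^ 2 + 2 / n)) z := by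
    have := (((gkdv_hasDerivAt_q hs).pow 2).const_mul ((2 / n) ^ 2 + 2 / n)).const_add
      (-(2 / n))
    refine this.congr_deriv ?_
    ring
  have h := (gkdv_d1 hA hn hs).mul hin
  refine h.congr_deriv ?_
  simp only [gkdvG3, gkdvG2, gkdvG1]
  norm_num
  field_simp
  ring



/-- The explicit singular traveling-wave solution of the constant-coefficient generalized
KdV equation `u_t + uⁿ u_x + ε u_{xxx} = 0` (with `uⁿ` a real power), valid on the open
set where the argument of `sinh` is nonzero. -/
theorem stmt_15 (n ε σ C : ℝ) (hn : n ≠ 0) (hσε : 0 < σ / ε)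
    (hpos : 0 < -(σ * (n + 1) * (n + 2))) (u : ℝ → ℝ → ℝ)
    (hu : ∀ t x : ℝ, u t x = (-(σ * (n + 1) * (n + 2))
      / (2 * Real.sinh (n / 2 * Real.sqrt (σ / ε) * (x - σ * t) + C) ^ 2)) ^ (1 / n)) :
    (∀ t x : ℝ, n / 2 * Real.sqrt (σ / ε) * (x - σ * t) + C ≠ 0 → 0 < u t x) ∧
    ContDiffOn ℝ (⊤ : ℕ∞) (fun p : ℝ × ℝ => u p.1 p.2)
      {p : ℝ × ℝ | n / 2 * Real.sqrt (σ / ε) * (p.2 - σ * p.1) + C ≠ 0} ∧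
      ∀ t x : ℝ, n / 2 * Real.sqrt (σ / ε) * (x - σ * t) + C ≠ 0 →
        pt u t x + u t x ^ n * px u t x + ε * pxxx u t x = 0 := by
  set A := -(σ * (n + 1) * (n + 2)) with hA_def
  set k := n / 2 * Real.sqrt (σ / ε) with hk_def
  have hA : 0 < A := hpos
  have hε : ε ≠ 0 := by
    rintro rfl
    simp at hσε
  have hsq : Real.sqrt (σ / ε) ^ 2 = σ / ε := Real.sq_sqrt hσε.le
  have hk2 : ε * k ^ 2 = σ * n ^ 2 / 4 := by
    rw [hk_def, mul_pow, hsq]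
    field_simp
    ring
  have hu' : ∀ t x : ℝ, u t x = gkdvG A n (k * (x - σ * t) + C) := hu
  refine ⟨?_, ?_, ?_⟩
  · intro t x hz
    have hs : Real.sinh (k * (x - σ * t) + C) ≠ 0 := fun h => hz (Real.sinh_eq_zero.mp h)
    rw [hu' t x]
    exact gkdv_pos hA hs
  · intro p hp
    have hsP : Real.sinh (k * (p.2 - σ * p.1) + C) ≠ 0 :=
      fun h => hp (Real.sinh_eq_zero.mp h)
    have hb1 : ContDiffAt ℝ (⊤ : ℕ∞)
        (fun p : ℝ × ℝ => A / (2 * Real.sinh (k * (p.2 - σ * p.1) + C) ^ 2)) p := by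
      apply contDiffAt_const.div
      · have hin : ContDiff ℝ (⊤ : ℕ∞) (fun p : ℝ × ℝ => k * (p.2 - σ * p.1) + C) := by fun_prop
        have : ContDiff ℝ (⊤ : ℕ∞) (fun p : ℝ × ℝ => 2 * Real.sinh (k * (p.2 - σ * p.1) + C) ^ 2) :=
          contDiff_const.mul ((Real.contDiff_sinh.comp hin).pow 2)
        exact this.contDiffAt
      · have := pow_two_pos_of_ne_zero hsP
        positivity
    have hbne : A / (2 * Real.sinh (k * (p.2 - σ * p.1) + C) ^ 2) ≠ 0 :=
      (gkdv_base_pos hA hsP).ne'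
    have h2 := (Real.contDiffAt_rpow_const_of_ne (p := 1 / n) hbne).comp p hb1
    have hfun : (fun p : ℝ × ℝ => u p.1 p.2) =
        fun p : ℝ × ℝ => (A / (2 * Real.sinh (k * (p.2 - σ * p.1) + C) ^ 2)) ^ (1 / n) :=
      funext fun p => hu' p.1 p.2
    rw [hfun]
    exact h2.contDiffWithinAt
  · intro t x hz
    have hs : Real.sinh (k * (x - σ * t) + C) ≠ 0 := fun h => hz (Real.sinh_eq_zero.mp h)
    set z := k * (x - σ * t) + C with hzdef
    have hinT : HasDerivAt (fun s : ℝ => k * (x - σ * s) + C) (k * (0 - σ * 1)) t :=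
      (((hasDerivAt_const t x).sub ((hasDerivAt_id t).const_mul σ)).const_mul k).add_const C
    have hpt : pt u t x = gkdvG1 A n z * (k * (0 - σ * 1)) := by
      have hfun : (fun s => u s x) = fun s => gkdvG A n (k * (x - σ * s) + C) :=
        funext fun s => hu' s x
      rw [pt, hfun]
      exact ((gkdv_d1 hA hn hs).comp t hinT).deriv
    have hwD : ∀ y : ℝ, HasDerivAt (fun y : ℝ => k * (y - σ * t) + C) (k * (1 - 0)) y :=
      fun y => (((hasDerivAt_id y).sub (hasDerivAt_const y (σ * t))).const_mul k).add_const C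
    have hpx : px u t x = gkdvG1 A n z * (k * (1 - 0)) := by
      have hfun : (fun y => u t y) = fun y => gkdvG A n (k * (y - σ * t) + C) :=
        funext fun y => hu' t y
      rw [px, hfun]
      exact ((gkdv_d1 hA hn hs).comp x (hwD x)).deriv
    have hSopen : IsOpen {y : ℝ | Real.sinh (k * (y - σ * t) + C) ≠ 0} := by
      have hc : Continuous fun y : ℝ => Real.sinh (k * (y - σ * t) + C) :=
        Real.continuous_sinh.comp (by fun_prop)
      exact isOpen_ne.preimage hc
    have hxS : x ∈ {y : ℝ | Real.sinh (k * (y - σ * t) + C) ≠ 0} := hs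
    have hd1 : ∀ y ∈ {y : ℝ | Real.sinh (k * (y - σ * t) + C) ≠ 0},
        HasDerivAt (fun y => gkdvG A n (k * (y - σ * t) + C))
          (gkdvG1 A n (k * (y - σ * t) + C) * (k * (1 - 0))) y :=
      fun y hy => by have := (gkdv_d1 hA hn hy).comp y (hwD y); exact this
    have hd2 : ∀ y ∈ {y : ℝ | Real.sinh (k * (y - σ * t) + C) ≠ 0},
        HasDerivAt (fun y => gkdvG1 A n (k * (y - σ * t) + C) * (k * (1 - 0)))
          (gkdvG2 A n (k * (y - σ * t) + C) * (k * (1 - 0)) * (k * (1 - 0))) y :=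
      fun y hy => ((gkdv_d2 hA hn hy).comp y (hwD y)).mul_const _
    have hd3 : HasDerivAt
        (fun y => gkdvG2 A n (k * (y - σ * t) + C) * (k * (1 - 0)) * (k * (1 - 0)))
        (gkdvG3 A n z * (k * (1 - 0)) * (k * (1 - 0)) * (k * (1 - 0))) x :=
      (((gkdv_d3 hA hn hs).comp x (hwD x)).mul_const _).mul_const _
    have hE1 : deriv (fun y => gkdvG A n (k * (y - σ * t) + C)) =ᶠ[nhds x]
        fun y => gkdvG1 A n (k * (y - σ * t) + C) * (k * (1 - 0)) :=
      Filter.eventuallyEq_of_mem (hSopen.mem_nhds hxS) fun y hy => (hd1 y hy).deriv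
    have hE2 : deriv (deriv (fun y => gkdvG A n (k * (y - σ * t) + C))) =ᶠ[nhds x]
        fun y => gkdvG2 A n (k * (y - σ * t) + C) * (k * (1 - 0)) * (k * (1 - 0)) :=
      hE1.deriv.trans
        (Filter.eventuallyEq_of_mem (hSopen.mem_nhds hxS) fun y hy => (hd2 y hy).deriv)
    have hpxxx : pxxx u t x = gkdvG3 A n z * (k * (1 - 0)) * (k * (1 - 0)) * (k * (1 - 0)) := by
      have hfun : (fun y => u t y) = fun y => gkdvG A n (k * (y - σ * t) + C) :=
        funext fun y => hu' t y
      rw [pxxx, hfun, show (3 : ℕ) = 2 + 1 from rfl, iteratedDeriv_succ,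
        show (2 : ℕ) = 1 + 1 from rfl, iteratedDeriv_succ, iteratedDeriv_one]
      exact hE2.deriv_eq.trans hd3.deriv
    rw [hpt, hpx, hpxxx, hu' t x, gkdv_rpow_n hA hn hs]
    simp only [gkdvG1, gkdvG3]
    have hc := Real.cosh_sq z
    have hk2' : 4 * (ε * k ^ 2) = σ * n ^ 2 := by linarith
    rw [hA_def]
    clear_value k z
    field_simp
    linear_combination
      (gkdvG (-(σ * (n + 1) * (n + 2))) n z * Real.cosh z * k *
        ((n * Real.sinh z ^ 2 * (12 + n * 4) + Real.cosh z ^ 2 * (-8 - n * 12 - n ^ 2 * 4)) * hk2 -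
          σ * n ^ 2 * (n + 1) * (n + 2) * hc))
end

section
/- Let n be a positive integer, ρ ∈ ℝ, ε ≠ 0, γ ∈ ℝ. Suppose φ : ℝ → ℝ is three times differentiable and solves the initial value problem ε φ'''(ω) + φ(ω)ⁿ φ'(ω) − ((ρ+1)/3) ω φ'(ω) + ((ρ−2)/(3n)) φ(ω) = 0 with φ(0) = γ, φ'(0) = 0, φ''(0) = 0. Define u(x,t) = t^((ρ−2)/(3n)) φ( x t^(−(ρ+1)/3) ) for t > 0, x ≥ 0. Then: (i) u satisfies u_t + uⁿ u_x + ε t^ρ u_{xxx} = 0 for all t > 0, x > 0; (ii) u(0,t) = γ t^((ρ−2)/(3n)) for all t > 0; (iii) u_x(0,t) = 0 for all t > 0; and (iv) u_{xx}(0,t) = 0 for all t > 0. -/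
/-- Partial derivative in `t` of `u = u(x,t)`. -/
noncomputable def ut (u : ℝ → ℝ → ℝ) (x t : ℝ) : ℝ := deriv (fun s => u x s) t
/-- Partial derivative in `x` of `u = u(x,t)`. -/
noncomputable def ux (u : ℝ → ℝ → ℝ) (x t : ℝ) : ℝ := deriv (fun y => u y t) x
/-- Second partial derivative in `x` of `u = u(x,t)`. -/
noncomputable def uxx (u : ℝ → ℝ → ℝ) (x t : ℝ) : ℝ := iteratedDeriv 2 (fun y => u y t) x
/-- Third partial derivative in `x` of `u = u(x,t)`. -/
noncomputable def uxxx (u : ℝ → ℝ → ℝ) (x t : ℝ) : ℝ := iteratedDeriv 3 (fun y => u y t) x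

/-!
Put `a = (ρ-2)/(3n)`, `b = -(ρ+1)/3` and `ω = x t^b`. On `u = t^a φ(ω)` the time derivative
is `t^(a-1) (a φ + b ω φ')`, and the balances `n a + b = -1`, `ρ + 3b = -1` make the powers of `t`
in `uⁿ u_x` and `t^ρ u_xxx` equal to `t^(a-1)` too, so the PDE residual is `t^(a-1)` times the
ODE residual at `ω`. At `x = 0` we have `ω = 0` for every `t`, so the boundary data are the
initial data of `φ`.
-/

open Real

theorem deriv_const_mul_comp_mul_const {ψ : ℝ → ℝ} (hψ : Differentiable ℝ ψ) (k c : ℝ) :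
    deriv (fun y => k * ψ (y * c)) = fun y => k * c * deriv ψ (y * c) := by
  funext y
  have h : HasDerivAt (fun y => k * ψ (y * c)) (k * (deriv ψ (y * c) * c)) y :=
    ((hψ (y * c)).hasDerivAt.comp y (hasDerivAt_mul_const c)).const_mul k
  rw [h.deriv]
  ring

theorem iterate_deriv_const_mul_comp_mul_const {ψ : ℝ → ℝ} {m : ℕ}
    (hψ : ∀ j < m, Differentiable ℝ (deriv^[j] ψ)) (k c : ℝ) :
    deriv^[m] (fun y => k * ψ (y * c)) = fun y => k * c ^ m * deriv^[m] ψ (y * c) := by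
  induction m with
  | zero => simp
  | succ m ih =>
    rw [Function.iterate_succ_apply', ih fun j hj => hψ j (by omega),
      deriv_const_mul_comp_mul_const (hψ m (by omega)), Function.iterate_succ_apply', pow_succ,
      mul_assoc k]

theorem iteratedDeriv_rpow_mul_comp_mul_rpow {φ : ℝ → ℝ} {m : ℕ}
    (hφ : ∀ j < m, Differentiable ℝ (deriv^[j] φ)) (a b t x : ℝ) :
    iteratedDeriv m (fun y => t ^ a * φ (y * t ^ b)) x
      = t ^ a * (t ^ b) ^ m * deriv^[m] φ (x * t ^ b) := by
  rw [iteratedDeriv_eq_iterate, iterate_deriv_const_mul_comp_mul_const hφ]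

theorem hasDerivAt_rpow_mul_comp_mul_rpow {φ : ℝ → ℝ} (hφ : Differentiable ℝ φ) {t : ℝ}
    (ht : 0 < t) (a b x : ℝ) :
    HasDerivAt (fun s => s ^ a * φ (x * s ^ b))
      (t ^ (a - 1) * (a * φ (x * t ^ b) + b * (x * t ^ b) * deriv φ (x * t ^ b))) t := by
  have hpow (e : ℝ) : HasDerivAt (fun s : ℝ => s ^ e) (e * t ^ (e - 1)) t :=
    hasDerivAt_rpow_const (Or.inl ht.ne')
  have hinner := (hφ (x * t ^ b)).hasDerivAt.comp t ((hpow b).const_mul x)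
  refine ((hpow a).mul hinner).congr_deriv ?_
  rw [Function.comp_apply, rpow_sub ht, rpow_sub ht, rpow_one]
  field_simp

theorem gkdv_residual_of_selfSimilar {φ : ℝ → ℝ}
    (hφ : ∀ j < 3, Differentiable ℝ (deriv^[j] φ)) {n : ℕ} {a b ρ : ℝ}
    (hnonlin : n * a + b = -1) (hdisp : ρ + 3 * b = -1) (ε : ℝ) {u : ℝ → ℝ → ℝ}
    (hu : ∀ x t, u x t = t ^ a * φ (x * t ^ b)) {t : ℝ} (ht : 0 < t) (x : ℝ) :
    ut u x t + u x t ^ n * ux u x t + ε * t ^ ρ * uxxx u x t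
      = t ^ (a - 1) * (ε * deriv (deriv (deriv φ)) (x * t ^ b)
        + φ (x * t ^ b) ^ n * deriv φ (x * t ^ b)
        + b * (x * t ^ b) * deriv φ (x * t ^ b) + a * φ (x * t ^ b)) := by
  have hslice : (fun y => u y t) = fun y => t ^ a * φ (y * t ^ b) := funext fun y => hu y t
  have hpath : (fun s => u x s) = fun s => s ^ a * φ (x * s ^ b) := funext fun s => hu x s
  have htime := hasDerivAt_rpow_mul_comp_mul_rpow (φ := φ) (hφ 0 (by norm_num)) ht a b x
  have hux := iteratedDeriv_rpow_mul_comp_mul_rpow (m := 1) (fun j hj => hφ j (by omega)) a b t x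
  rw [iteratedDeriv_one] at hux
  have hnonlin' : (t ^ a) ^ n * (t ^ a * t ^ b) = t ^ (a - 1) := by
    rw [← rpow_natCast, ← rpow_mul ht.le, ← rpow_add ht, ← rpow_add ht]
    congr 1
    linear_combination hnonlin
  have hdisp' : t ^ ρ * (t ^ a * (t ^ b) ^ 3) = t ^ (a - 1) := by
    rw [← rpow_natCast, ← rpow_mul ht.le, ← rpow_add ht, ← rpow_add ht]
    congr 1
    linear_combination hdisp
  rw [ut, ux, uxxx, hslice, hux, iteratedDeriv_rpow_mul_comp_mul_rpow hφ, hu x t, hpath,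
    htime.deriv]
  simp only [Function.iterate_succ, Function.iterate_zero, Function.comp_apply, id, pow_one]
  set ω := x * t ^ b
  linear_combination φ ω ^ n * deriv φ ω * hnonlin' + ε * deriv (deriv (deriv φ)) ω * hdisp'

theorem stmt_16_general (n : ℕ) (hn : 0 < n) (ρ ε γ : ℝ)
    (φ : ℝ → ℝ) (hφ1 : Differentiable ℝ φ) (hφ2 : Differentiable ℝ (deriv φ))
    (hφ3 : Differentiable ℝ (deriv (deriv φ)))
    (hode : ∀ ω : ℝ, ε * deriv (deriv (deriv φ)) ω + φ ω ^ n * deriv φ ω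
      - (ρ + 1) / 3 * ω * deriv φ ω + (ρ - 2) / (3 * (n:ℝ)) * φ ω = 0)
    (hic : φ 0 = γ) (hic' : deriv φ 0 = 0) (hic'' : deriv (deriv φ) 0 = 0)
    (u : ℝ → ℝ → ℝ)
    (hu : ∀ x t : ℝ, u x t = t ^ ((ρ - 2) / (3 * (n:ℝ))) * φ (x * t ^ (-(ρ + 1) / 3))) :
    (∀ t, 0 < t → ∀ x, 0 < x →
      ut u x t + (u x t) ^ n * ux u x t + ε * t ^ ρ * uxxx u x t = 0) ∧
    (∀ t, 0 < t → u 0 t = γ * t ^ ((ρ - 2) / (3 * (n:ℝ)))) ∧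
    (∀ t, 0 < t → ux u 0 t = 0) ∧
    (∀ t, 0 < t → uxx u 0 t = 0) := by
  have hφ : ∀ j < 3, Differentiable ℝ (deriv^[j] φ) := by
    intro j hj
    interval_cases j
    exacts [hφ1, hφ2, hφ3]
  have hnonlin : n * ((ρ - 2) / (3 * n)) + -(ρ + 1) / 3 = -1 := by
    field_simp
    ring
  have hdisp : ρ + 3 * (-(ρ + 1) / 3) = -1 := by ring
  have hboundary (m : ℕ) (hm : m ≤ 3) (t : ℝ) :
      iteratedDeriv m (fun y => u y t) 0
        = t ^ ((ρ - 2) / (3 * n)) * (t ^ (-(ρ + 1) / 3)) ^ m * deriv^[m] φ 0 := by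
    rw [funext fun y => hu y t, iteratedDeriv_rpow_mul_comp_mul_rpow fun j hj => hφ j (by omega),
      zero_mul]
  refine ⟨fun t ht x _ => ?_, fun t _ => by rw [hu, zero_mul, hic, mul_comm],
    fun t _ => by simp [ux, ← iteratedDeriv_one, hboundary, hic'],
    fun t _ => by simp [uxx, hboundary, hic'']⟩
  rw [gkdv_residual_of_selfSimilar hφ hnonlin hdisp ε hu ht x]
  linear_combination t ^ ((ρ - 2) / (3 * n) - 1) * hode (x * t ^ (-(ρ + 1) / 3))

/-- Reduction of the IBVP for the generalized KdV equation `u_t + uⁿ u_x + ε t^ρ u_{xxx} = 0`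
to the IVP for a third-order ODE: a solution `φ` of the IVP yields, via the ansatz
`u = t^{(ρ−2)/(3n)} φ(x t^{−(ρ+1)/3})`, a solution of the PDE satisfying the boundary
conditions at `x = 0`. -/
theorem stmt_16 (n : ℕ) (hn : 0 < n) (ρ ε γ : ℝ) (hε : ε ≠ 0)
    (φ : ℝ → ℝ) (hφ1 : Differentiable ℝ φ) (hφ2 : Differentiable ℝ (deriv φ))
    (hφ3 : Differentiable ℝ (deriv (deriv φ)))
    (hode : ∀ ω : ℝ, ε * deriv (deriv (deriv φ)) ω + φ ω ^ n * deriv φ ω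
      - (ρ + 1) / 3 * ω * deriv φ ω + (ρ - 2) / (3 * (n:ℝ)) * φ ω = 0)
    (hic : φ 0 = γ) (hic' : deriv φ 0 = 0) (hic'' : deriv (deriv φ) 0 = 0)
    (u : ℝ → ℝ → ℝ)
    (hu : ∀ x t : ℝ, u x t = t ^ ((ρ - 2) / (3 * (n:ℝ))) * φ (x * t ^ (-(ρ + 1) / 3))) :
    (∀ t, 0 < t → ∀ x, 0 < x →
      ut u x t + (u x t) ^ n * ux u x t + ε * t ^ ρ * uxxx u x t = 0) ∧
    (∀ t, 0 < t → u 0 t = γ * t ^ ((ρ - 2) / (3 * (n:ℝ)))) ∧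
    (∀ t, 0 < t → ux u 0 t = 0) ∧
    (∀ t, 0 < t → uxx u 0 t = 0) :=
  stmt_16_general n hn ρ ε γ φ hφ1 hφ2 hφ3 hode hic hic' hic'' u hu
end

section
/- Let n be a positive integer, h : ℝ → ℝ smooth, and λ, κ, ρ ∈ ℝ with λ ≠ 0. Let H(t) = ∫₀ᵗ h(s) ds and T(t) = ∫₀ᵗ e^(−n H(s)) ds, and suppose T(t) + κ > 0 for all t. Define g(t) = λ (T(t) + κ)^ρ e^(−n H(t)). Suppose u : ℝ × ℝ → ℝ is C³ and satisfies u_t + uⁿ u_x + h(t) u + g(t) u_{xxx} = 0 everywhere, and suppose ũ is a C³ function satisfying ũ(T(t), x) = e^(H(t)) u(t,x) for all (t,x). Then at every point (t̃, x) = (T(t), x), ũ satisfies ũ_{t̃} + ũⁿ ũ_x + λ (t̃ + κ)^ρ ũ_{xxx} = 0. -/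
lemma iterDeriv_const_mul (c : ℝ) (f : ℝ → ℝ) (n : ℕ) :
    iteratedDeriv n (fun y => c * f y) = fun x => c * iteratedDeriv n f x := by
  induction n with
  | zero => simp [iteratedDeriv_zero]
  | succ n ih =>
    funext x
    rw [iteratedDeriv_succ, ih, iteratedDeriv_succ]
    exact deriv_const_mul_field c

lemma ftc_cont (f : ℝ → ℝ) (hf : Continuous f) (t : ℝ) :
    HasDerivAt (fun s => ∫ x in (0:ℝ)..s, f x) (f t) t :=
  intervalIntegral.integral_hasDerivAt_right (hf.intervalIntegrable _ _)
    hf.aestronglyMeasurable.stronglyMeasurableAtFilter hf.continuousAt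


/-- Case 2 of Table 2: for arbitrary damping `h` and dispersion coefficient
`g(t) = λ (T(t)+κ)^ρ e^{−nH(t)}` with `H = ∫₀ᵗ h`, `T = ∫₀ᵗ e^{−nH}`, the gauging
transformation `ũ(T(t), x) = e^{H(t)} u(t,x)` maps solutions of
`u_t + uⁿ u_x + h(t) u + g(t) u_{xxx} = 0` to solutions of
`ũ_t + ũⁿ ũ_x + λ (t̃+κ)^ρ ũ_{xxx} = 0` along the curve `t̃ = T(t)`. -/
theorem stmt_19 (n : ℕ) (hn : 0 < n) (h : ℝ → ℝ) (hh : ContDiff ℝ (⊤ : ℕ∞) h)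
    (lam κ ρ : ℝ) (hlam : lam ≠ 0)
    (H T : ℝ → ℝ)
    (hH : ∀ t, H t = ∫ s in (0:ℝ)..t, h s)
    (hT : ∀ t, T t = ∫ s in (0:ℝ)..t, Real.exp (-(n:ℝ) * H s))
    (hTκ : ∀ t, 0 < T t + κ)
    (g : ℝ → ℝ)
    (hgdef : ∀ t, g t = lam * (T t + κ) ^ ρ * Real.exp (-(n:ℝ) * H t))
    (u : ℝ → ℝ → ℝ) (hu : ContDiff ℝ 3 fun p : ℝ × ℝ => u p.1 p.2)
    (hpde : ∀ t x, pt u t x + (u t x) ^ n * px u t x + h t * u t x + g t * pxxx u t x = 0)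
    (u2 : ℝ → ℝ → ℝ) (hu2 : ContDiff ℝ 3 fun p : ℝ × ℝ => u2 p.1 p.2)
    (htrans : ∀ t x, u2 (T t) x = Real.exp (H t) * u t x) :
    ∀ t x, pt u2 (T t) x + (u2 (T t) x) ^ n * px u2 (T t) x
      + lam * (T t + κ) ^ ρ * pxxx u2 (T t) x = 0 := by
  intro t x
  set A := Real.exp (H t) with hA
  set B := Real.exp (-(n:ℝ) * H t) with hB
  set C := Real.exp ((n:ℝ) * H t) with hC
  have hBC : B * C = 1 := by
    rw [hB, hC, ← Real.exp_add]; ring_nf; exact Real.exp_zero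
  -- derivatives of H and T
  have hHder : ∀ s, HasDerivAt H (h s) s := by
    intro s; rw [funext hH]; exact ftc_cont h hh.continuous s
  have hHdiff : Differentiable ℝ H := fun s => (hHder s).differentiableAt
  have hHcont : Continuous H := hHdiff.continuous
  have hTder : HasDerivAt T B t := by
    rw [funext hT, hB]
    exact ftc_cont _ (Real.continuous_exp.comp (continuous_const.mul hHcont)) t
  -- sections are differentiable in t
  have husec : ∀ (v : ℝ → ℝ → ℝ), ContDiff ℝ 3 (fun p : ℝ × ℝ => v p.1 p.2) →
      ∀ y s, HasDerivAt (fun s => v s y) (pt v s y) s := by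
    intro v hv y s
    have hsec : ContDiff ℝ 3 (fun s : ℝ => v s y) :=
      hv.comp (contDiff_id.prodMk contDiff_const)
    exact ((hsec.differentiable (by norm_num)) s).hasDerivAt
  -- chain rule side
  have hchain : HasDerivAt (fun s => u2 (T s) x) (pt u2 (T t) x * B) t :=
    (husec u2 hu2 x (T t)).comp t hTder
  -- product side
  have hfun : (fun s => u2 (T s) x) = fun s => Real.exp (H s) * u s x :=
    funext fun s => htrans s x
  have hprod : HasDerivAt (fun s => Real.exp (H s) * u s x)
      (Real.exp (H t) * h t * u t x + Real.exp (H t) * pt u t x) t :=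
    ((hHder t).exp).mul (husec u hu x t)
  rw [hfun] at hchain
  have e1 : pt u2 (T t) x * B = A * h t * u t x + A * pt u t x :=
    hchain.unique hprod
  -- x-derivatives
  have hxfun : (fun y => u2 (T t) y) = fun y => A * u t y :=
    funext fun y => htrans t y
  have e2 : px u2 (T t) x = A * px u t x := by
    rw [px, hxfun, px]; exact deriv_const_mul_field A
  have e3 : pxxx u2 (T t) x = A * pxxx u t x := by
    rw [pxxx, hxfun, iterDeriv_const_mul, pxxx]
  have e4 : u2 (T t) x = A * u t x := htrans t x
  have e5 : A ^ n = C := by rw [hA, hC, Real.exp_nat_mul]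
  have key := hpde t x
  rw [hgdef, ← hB] at key
  rw [e2, e3, e4, mul_pow, e5]
  have e1' : pt u2 (T t) x = C * (A * h t * u t x + A * pt u t x) := by
    calc pt u2 (T t) x = pt u2 (T t) x * (B * C) := by rw [hBC, mul_one]
    _ = (pt u2 (T t) x * B) * C := by ring
    _ = _ := by rw [e1]; ring
  rw [e1']
  linear_combination (C * A) * key - (lam * (T t + κ) ^ ρ * A * pxxx u t x) * hBC
end
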